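/- Let Γ be a consistent set of formulae and E(Γ) the set of consistent supersets of Γ. Then Δ is a maximal element of E(Γ) (under inclusion) if and only if: (i) Γ ⊆ Δ and Δ is consistent; (ii) whenever Δ ⊢ φ ∸ 2^{−n} for all n < ω, then φ ∈ Δ; and (iii) for all formulae φ, ψ, either φ ∸ ψ ∈ Δ or ψ ∸ φ ∈ Δ. -/

import Mathlib

/-- Formulae of continuous propositional logic over propositional variables `α`:
truncated subtraction `∸`, negation, and halving. -/
inductive CF (α : Type) : Type
  | var : α → CF α
  | sub : CF α → CF α → CF α
  | neg : CF α → CF α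
  | half : CF α → CF α

variable {α : Type}

/-- The axiom schemata A1–A6 of continuous propositional logic. -/
inductive CAx : CF α → Prop
  | a1 (φ ψ : CF α) : CAx ((φ.sub ψ).sub φ)
  | a2 (φ ψ χ : CF α) : CAx (((χ.sub φ).sub (χ.sub ψ)).sub (ψ.sub φ))
  | a3 (φ ψ : CF α) : CAx ((φ.sub (φ.sub ψ)).sub (ψ.sub (ψ.sub φ)))
  | a4 (φ ψ : CF α) : CAx ((φ.sub ψ).sub ((ψ.neg).sub (φ.neg)))
  | a5 (φ : CF α) : CAx ((φ.half).sub (φ.sub φ.half))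
  | a6 (φ : CF α) : CAx ((φ.sub φ.half).sub φ.half)

/-- Derivability with modus ponens as the only rule of inference. -/
inductive CDeriv : Set (CF α) → CF α → Prop
  | ax {Γ : Set (CF α)} {φ : CF α} : CAx φ → CDeriv Γ φ
  | hyp {Γ : Set (CF α)} {φ : CF α} : φ ∈ Γ → CDeriv Γ φ
  | mp {Γ : Set (CF α)} {φ ψ : CF α} : CDeriv Γ φ → CDeriv Γ (ψ.sub φ) →
      CDeriv Γ ψ

/-- A set of formulae is consistent if some formula is not provable from it. -/
def CConsistent (Γ : Set (CF α)) : Prop := ∃ φ : CF α, ¬ CDeriv Γ φ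

/-- The formula `1`, shorthand for `¬(φ ∸ φ)`. -/
def oneCF [Inhabited α] : CF α := ((CF.var (default : α)).sub (CF.var default)).neg

/-- The formula `2^{-n}`, i.e. `n`-fold halving of `1`. -/
def dyCF [Inhabited α] : ℕ → CF α
  | 0 => oneCF
  | n + 1 => (dyCF n).half

/-!
Maximality of `Δ` among consistent supersets of `Γ` says exactly that every formula `φ` with
`Δ ∪ {φ}` consistent already lies in `Δ`. Two facts about consistent `Δ` therefore give (ii)
and (iii): `Δ ∪ {φ}` stays consistent when `Δ ⊢ φ ∸ 2^{-n}` for all `n`, and one of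
`Δ ∪ {φ ∸ ψ}`, `Δ ∪ {ψ ∸ φ}` is consistent. Both rest on a deduction theorem with strong
conjunction powers, `Δ ∪ {θ} ⊢ ψ ⟹ Δ ⊢ θⁿ → ψ` for some `n`: for the first, `n` copies of
`2^{-(n+1)}` add up to at most `1/2`; for the second, each disjunct of prelinearity
`(φ → ψ) ∨ (ψ → φ)` can be raised to any power. Conversely, if (ii) and (iii) hold and
`Γ' ⊇ Δ` is consistent, then for `χ ∈ Γ'` the alternative `2^{-n} ∸ χ ∈ Δ` would give
`Γ' ⊢ 2^{-n}`, hence `Γ' ⊢ 1`; so `Δ ⊢ χ ∸ 2^{-n}` for every `n` and `χ ∈ Δ`.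
-/

-- `0` is truth, so `b ∸ a` is the implication `a → b`.
local notation:28 a:29 " ⊸ " b:28 => CF.sub b a

namespace CF

def tensor (a b : CF α) : CF α := (b ⊸ a.neg).neg

-- Weak disjunction: its value is `min a b`.
def or (a b : CF α) : CF α := (a ⊸ b) ⊸ b

end CF

local infixr:35 " ⊙ " => CF.tensor

local infixl:30 " ⋎ " => CF.or

namespace CDeriv

variable {Γ : Set (CF α)} {a b c u v w : CF α}

section Axioms

variable (a b c : CF α)

theorem imp_const : CDeriv Γ (a ⊸ b ⊸ a) := ax (.a1 a b)

theorem imp_trans_imp : CDeriv Γ ((a ⊸ b) ⊸ (b ⊸ c) ⊸ a ⊸ c) := ax (.a2 a b c)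

theorem or_comm_imp : CDeriv Γ (a ⋎ b ⊸ b ⋎ a) := ax (.a3 a b)

theorem neg_imp_neg_imp : CDeriv Γ ((a.neg ⊸ b.neg) ⊸ b ⊸ a) := ax (.a4 a b)

theorem imp_half_imp_half : CDeriv Γ ((a.half ⊸ a) ⊸ a.half) := ax (.a5 a)

theorem half_imp_half_imp : CDeriv Γ (a.half ⊸ a.half ⊸ a) := ax (.a6 a)

end Axioms

theorem precomp (h : CDeriv Γ (a ⊸ b)) : CDeriv Γ ((b ⊸ c) ⊸ a ⊸ c) :=
  mp h (imp_trans_imp a b c)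

theorem imp_trans (h₁ : CDeriv Γ (a ⊸ b)) (h₂ : CDeriv Γ (b ⊸ c)) : CDeriv Γ (a ⊸ c) :=
  mp h₂ (precomp h₁)

theorem imp_imp_self (a b : CF α) : CDeriv Γ (a ⊸ (a ⊸ b) ⊸ b) :=
  (imp_const a (b ⊸ a)).imp_trans (or_comm_imp b a)

theorem imp_swap_imp (a b c : CF α) : CDeriv Γ ((a ⊸ b ⊸ c) ⊸ b ⊸ a ⊸ c) :=
  (imp_trans_imp a (b ⊸ c) c).imp_trans (precomp (imp_imp_self b c))

theorem imp_swap (h : CDeriv Γ (a ⊸ b ⊸ c)) : CDeriv Γ (b ⊸ a ⊸ c) :=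
  mp h (imp_swap_imp a b c)

theorem imp_self (a : CF α) : CDeriv Γ (a ⊸ a) :=
  mp (imp_const a a) (imp_swap (imp_const a (a ⊸ a ⊸ a)))

theorem postcomp (h : CDeriv Γ (b ⊸ c)) : CDeriv Γ ((a ⊸ b) ⊸ a ⊸ c) :=
  mp h (imp_swap (imp_trans_imp a b c))

theorem neg_imp (a b : CF α) : CDeriv Γ (a.neg ⊸ a ⊸ b) :=
  (imp_const a.neg b.neg).imp_trans (neg_imp_neg_imp b a)

-- `¬a` proves everything, in particular `¬(a ⊸ a)`, so contraposition turns `¬¬a` into `a`.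
theorem not_not_imp (a : CF α) : CDeriv Γ (a.neg.neg ⊸ a) :=
  mp (mp (imp_self a) (imp_swap (neg_imp_neg_imp a (a ⊸ a))))
    (precomp (neg_imp a.neg (a ⊸ a).neg))

theorem imp_not_not (a : CF α) : CDeriv Γ (a ⊸ a.neg.neg) :=
  mp (not_not_imp a.neg) (neg_imp_neg_imp a.neg.neg a)

theorem imp_imp_neg_imp_neg (a b : CF α) : CDeriv Γ ((a ⊸ b) ⊸ b.neg ⊸ a.neg) :=
  (precomp (not_not_imp a)).imp_trans
    ((postcomp (imp_not_not b)).imp_trans (neg_imp_neg_imp a.neg b.neg))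

theorem contrapose (h : CDeriv Γ (a ⊸ b)) : CDeriv Γ (b.neg ⊸ a.neg) :=
  mp h (imp_imp_neg_imp_neg a b)

theorem imp_neg_swap (a b : CF α) : CDeriv Γ ((a ⊸ b.neg) ⊸ b ⊸ a.neg) :=
  (imp_imp_neg_imp_neg a b.neg).imp_trans (precomp (imp_not_not b))

theorem uncurry (h : CDeriv Γ (c ⊸ a ⊸ b)) : CDeriv Γ (a ⊙ c ⊸ b) :=
  (contrapose (imp_swap (h.imp_trans (imp_imp_neg_imp_neg a b)))).imp_trans (not_not_imp b)

theorem curry (h : CDeriv Γ (a ⊙ c ⊸ b)) : CDeriv Γ (c ⊸ a ⊸ b) :=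
  (imp_swap ((contrapose h).imp_trans (not_not_imp _))).imp_trans (neg_imp_neg_imp b a)

theorem tensor_mono_left (h : CDeriv Γ (a ⊸ b)) : CDeriv Γ (a ⊙ c ⊸ b ⊙ c) :=
  contrapose (postcomp (contrapose h))

theorem tensor_mono_right (h : CDeriv Γ (c ⊸ b)) : CDeriv Γ (a ⊙ c ⊸ a ⊙ b) :=
  contrapose (precomp h)

theorem tensor_comm (a b : CF α) : CDeriv Γ (a ⊙ b ⊸ b ⊙ a) :=
  contrapose (imp_neg_swap a b)

theorem tensor_imp_left (a b : CF α) : CDeriv Γ (a ⊙ b ⊸ a) :=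
  (contrapose (imp_const a.neg b)).imp_trans (not_not_imp a)

theorem tensor_imp_right (a b : CF α) : CDeriv Γ (a ⊙ b ⊸ b) :=
  (tensor_comm a b).imp_trans (tensor_imp_left b a)

theorem tensor_assoc_symm_imp (a b c : CF α) : CDeriv Γ (a ⊙ b ⊙ c ⊸ (a ⊙ b) ⊙ c) := by
  have h : CDeriv Γ (b ⊸ c ⊸ a ⊸ (a ⊙ b) ⊙ c) :=
    (curry (imp_swap (curry (imp_self ((a ⊙ b) ⊙ c))))).imp_trans
      (imp_swap_imp a c _)
  exact uncurry ((tensor_comm b c).imp_trans (uncurry h))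

theorem tensor_assoc_imp (a b c : CF α) : CDeriv Γ ((a ⊙ b) ⊙ c ⊸ a ⊙ b ⊙ c) := by
  have h : CDeriv Γ (b ⊸ a ⊸ c ⊸ a ⊙ b ⊙ c) :=
    (imp_swap (curry (curry (imp_self (a ⊙ b ⊙ c))))).imp_trans
      (imp_swap_imp c a _)
  exact (tensor_comm _ c).imp_trans (uncurry (uncurry h))

theorem imp_or_left (a b : CF α) : CDeriv Γ (a ⊸ a ⋎ b) := imp_imp_self a b

theorem imp_or_right (a b : CF α) : CDeriv Γ (b ⊸ a ⋎ b) := imp_const b (a ⊸ b)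

theorem or_elim (h₁ : CDeriv Γ (a ⊸ c)) (h₂ : CDeriv Γ (b ⊸ c)) : CDeriv Γ (a ⋎ b ⊸ c) :=
  (precomp (precomp h₁)).imp_trans ((or_comm_imp c b).imp_trans
    ((precomp (precomp h₂)).imp_trans (mp (imp_self c) (imp_imp_self (c ⊸ c) c))))

theorem or_tensor (hu : CDeriv Γ (u ⋎ w)) (hv : CDeriv Γ (v ⋎ w)) :
    CDeriv Γ ((u ⊙ v) ⋎ w) := by
  have hw : CDeriv Γ (w ⊸ (u ⊙ v) ⋎ w) := imp_or_right _ w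
  have hvu : CDeriv Γ (v ⊸ u ⊸ (u ⊙ v) ⋎ w) :=
    (curry (imp_self (u ⊙ v))).imp_trans (postcomp (imp_or_left _ w))
  have hvw : CDeriv Γ (v ⋎ w ⊸ u ⊸ (u ⊙ v) ⋎ w) := or_elim hvu (hw.imp_trans (imp_const _ u))
  exact mp hv (mp hu (or_elim (imp_swap hvw) (hw.imp_trans (imp_const _ (v ⋎ w)))))

theorem divisibility (h : CDeriv Γ (u ⊸ v)) : CDeriv Γ (u ⊸ (v ⊸ u) ⊙ v) := by
  have hu : CDeriv Γ (u ⊸ (u.neg ⋎ v.neg).neg) :=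
    (imp_not_not u).imp_trans (contrapose (or_elim (imp_self u.neg) (contrapose h)))
  have hv : CDeriv Γ ((v ⊸ (v ⊸ u).neg) ⊸ u.neg ⋎ v.neg) :=
    (imp_neg_swap v (v ⊸ u)).imp_trans (precomp (neg_imp_neg_imp u v))
  exact hu.imp_trans (contrapose hv)

theorem tensor_imp_neg_imp (a b c : CF α) :
    CDeriv Γ (a ⊙ (b.neg ⊸ c) ⊸ (b ⊙ a).neg ⊸ c) :=
  uncurry (imp_swap ((imp_swap (not_not_imp (a ⊸ b.neg))).imp_trans (imp_trans_imp _ b.neg c)))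

-- With `p = x ⊸ y`, `q = y ⊸ x` the goal `(p ⊸ q) ⊸ q` uncurries to `y ⊙ (p ⊸ q) ⊸ x`;
-- contrapositively, `¬x` yields `p ⊙ ¬(q ⊙ y)` by divisibility along `¬x ⊸ ¬x ⋎ ¬y`.
theorem prelinearity (x y : CF α) : CDeriv Γ ((x ⊸ y) ⋎ (y ⊸ x)) := by
  set p := x ⊸ y
  set q := y ⊸ x
  have hp : CDeriv Γ ((x.neg ⋎ y.neg ⊸ x.neg) ⊸ p) :=
    (precomp (imp_or_right x.neg y.neg)).imp_trans (neg_imp_neg_imp y x)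
  have hqy : CDeriv Γ (x.neg ⋎ y.neg ⊸ (q ⊙ y).neg) :=
    or_elim (contrapose (uncurry (imp_imp_self y x))) (contrapose (tensor_imp_right q y))
  have hx : CDeriv Γ (x.neg ⊸ p ⊙ (q ⊙ y).neg) :=
    (divisibility (imp_or_left x.neg y.neg)).imp_trans
      ((tensor_mono_left hp).imp_trans (tensor_mono_right hqy))
  have hx' : CDeriv Γ (((q ⊙ y).neg ⊸ p.neg) ⊸ x) :=
    ((imp_not_not _).imp_trans (contrapose hx)).imp_trans (not_not_imp x)
  exact curry ((tensor_mono_right (imp_imp_neg_imp_neg p q)).imp_trans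
    ((tensor_imp_neg_imp y q p.neg).imp_trans hx'))

theorem imp_half (a : CF α) : CDeriv Γ (a ⊸ a.half) :=
  (imp_const a a.half).imp_trans (imp_half_imp_half a)

theorem imp_half_tensor_half (a : CF α) : CDeriv Γ (a ⊸ a.half ⊙ a.half) :=
  (divisibility (imp_half a)).imp_trans (tensor_mono_left (imp_half_imp_half a))

end CDeriv

section

variable [Inhabited α]

def zeroCF : CF α := CF.var default ⊸ CF.var default

def CF.tpow (a : CF α) : ℕ → CF α
  | 0 => zeroCF
  | n + 1 => a ⊙ a.tpow n

namespace CDeriv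

variable {Γ : Set (CF α)} {a b : CF α}

theorem deriv_zeroCF : CDeriv Γ (zeroCF : CF α) := imp_self _

theorem of_deriv_oneCF (h : CDeriv Γ (oneCF : CF α)) (b : CF α) : CDeriv Γ b :=
  mp deriv_zeroCF (mp h (neg_imp zeroCF b))

theorem deriv_oneCF_of_deriv_dyCF : ∀ {n : ℕ}, CDeriv Γ (dyCF n : CF α) → CDeriv Γ oneCF
  | 0, h => h
  | _ + 1, h => deriv_oneCF_of_deriv_dyCF (mp h (mp h (half_imp_half_imp _)))

theorem imp_zeroCF_tensor (a : CF α) : CDeriv Γ (a ⊸ zeroCF ⊙ a) :=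
  (imp_imp_self a zeroCF.neg).imp_trans
    ((imp_neg_swap _ zeroCF).imp_trans (mp deriv_zeroCF (imp_imp_self _ _)))

theorem tpow_mono (h : CDeriv Γ (a ⊸ b)) : ∀ n, CDeriv Γ (a.tpow n ⊸ b.tpow n)
  | 0 => imp_self _
  | n + 1 => (tensor_mono_left h).imp_trans (tensor_mono_right (tpow_mono h n))

theorem tpow_imp_tpow_of_le (a : CF α) {m n : ℕ} (h : m ≤ n) :
    CDeriv Γ (a.tpow n ⊸ a.tpow m) := by
  induction h with
  | refl => exact imp_self _
  | step _ ih => exact (tensor_imp_right a _).imp_trans ih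

theorem tpow_add_imp (a : CF α) : ∀ m n, CDeriv Γ (a.tpow (m + n) ⊸ a.tpow m ⊙ a.tpow n)
  | 0, n => by
    rw [Nat.zero_add]
    exact imp_zeroCF_tensor _
  | m + 1, n => by
    rw [Nat.succ_add]
    exact (tensor_mono_right (tpow_add_imp a m n)).imp_trans (tensor_assoc_symm_imp _ _ _)

theorem tpow_imp_tpow_two_mul (h : CDeriv Γ (a ⊸ b ⊙ b)) :
    ∀ n, CDeriv Γ (a.tpow n ⊸ b.tpow (2 * n))
  | 0 => imp_self _
  | n + 1 => (tensor_mono_left h).imp_trans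
      ((tensor_mono_right (tpow_imp_tpow_two_mul h n)).imp_trans (tensor_assoc_imp _ _ _))

theorem dyCF_one_imp_tpow : ∀ n, CDeriv Γ (dyCF 1 ⊸ (dyCF (n + 1) : CF α).tpow (2 ^ n))
  | 0 => (imp_zeroCF_tensor _).imp_trans (tensor_comm _ _)
  | n + 1 => by
    rw [pow_succ']
    exact (dyCF_one_imp_tpow n).imp_trans (tpow_imp_tpow_two_mul (imp_half_tensor_half _) _)

theorem deduction {Δ : Set (CF α)} {b : CF α} (h : CDeriv Γ b) (hΓ : Γ ⊆ insert a Δ) :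
    ∃ n, CDeriv Δ (a.tpow n ⊸ b) := by
  induction h with
  | ax hb => exact ⟨0, mp (ax hb) (imp_const _ _)⟩
  | hyp hb =>
    rcases hΓ hb with rfl | hb
    · exact ⟨1, tensor_imp_left _ _⟩
    · exact ⟨0, mp (hyp hb) (imp_const _ _)⟩
  | mp _ _ ih₁ ih₂ =>
    obtain ⟨n₁, h₁⟩ := ih₁
    obtain ⟨n₂, h₂⟩ := ih₂
    exact ⟨n₁ + n₂, (tpow_add_imp a n₁ n₂).imp_trans ((tensor_mono_left h₁).imp_trans (uncurry h₂))⟩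

theorem or_tpow (h : CDeriv Γ (a ⋎ b)) : ∀ n, CDeriv Γ (a.tpow n ⋎ b)
  | 0 => mp deriv_zeroCF (imp_or_left _ _)
  | n + 1 => or_tensor h (or_tpow h n)

theorem or_tpow_tpow (h : CDeriv Γ (a ⋎ b)) (m n : ℕ) : CDeriv Γ (a.tpow m ⋎ b.tpow n) :=
  or_tpow (mp (or_tpow (mp h (or_comm_imp a b)) n) (or_comm_imp _ a)) m

end CDeriv

open CDeriv

theorem cconsistent_iff_not_deriv_oneCF {Γ : Set (CF α)} :
    CConsistent Γ ↔ ¬ CDeriv Γ oneCF :=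
  ⟨fun ⟨b, hb⟩ h => hb (of_deriv_oneCF h b), fun h => ⟨oneCF, h⟩⟩

namespace CConsistent

variable {Δ : Set (CF α)}

-- `n · 2^{-(n+1)} ≤ 1/2`, so `n` copies of `2^{-(n+1)}` give `1/2 ⊸ 1`, and A5 then proves `1/2`.
theorem insert_of_forall_deriv_sub_dyCF {a : CF α} (hΔ : CConsistent Δ)
    (h : ∀ n, CDeriv Δ (a.sub (dyCF n))) : CConsistent (insert a Δ) := by
  rw [cconsistent_iff_not_deriv_oneCF] at hΔ ⊢
  intro ha
  obtain ⟨n, hn⟩ := ha.deduction subset_rfl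
  have half_imp_one : CDeriv Δ (dyCF 1 ⊸ oneCF) :=
    ((dyCF_one_imp_tpow n).imp_trans (tpow_imp_tpow_of_le _ Nat.lt_two_pow_self.le)).imp_trans
      ((tpow_mono (h (n + 1)) n).imp_trans hn)
  exact hΔ (deriv_oneCF_of_deriv_dyCF (n := 1) (mp half_imp_one (imp_half_imp_half oneCF)))

theorem insert_sub_or_insert_sub (hΔ : CConsistent Δ) (a b : CF α) :
    CConsistent (insert (a.sub b) Δ) ∨ CConsistent (insert (b.sub a) Δ) := by
  simp only [cconsistent_iff_not_deriv_oneCF] at hΔ ⊢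
  by_contra! h
  obtain ⟨m, hm⟩ := h.1.deduction subset_rfl
  obtain ⟨n, hn⟩ := h.2.deduction subset_rfl
  exact hΔ (mp (or_tpow_tpow (prelinearity b a) m n) (or_elim hm hn))

end CConsistent

theorem eq_of_consistent_superset {Δ Γ' : Set (CF α)}
    (hclosed : ∀ a : CF α, (∀ n : ℕ, CDeriv Δ (a.sub (dyCF n))) → a ∈ Δ)
    (htotal : ∀ a b : CF α, a.sub b ∈ Δ ∨ b.sub a ∈ Δ)
    (hΓ' : CConsistent Γ') (hΔΓ' : Δ ⊆ Γ') : Γ' = Δ := by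
  refine Set.Subset.antisymm (fun c hc => hclosed c fun n => ?_) hΔΓ'
  rcases htotal c (dyCF n) with h | h
  · exact hyp h
  · exact absurd (deriv_oneCF_of_deriv_dyCF (mp (hyp hc) (hyp (hΔΓ' h))))
      (cconsistent_iff_not_deriv_oneCF.1 hΓ')

end

theorem maximal_consistent_characterization_general [Inhabited α]
    (Γ Δ : Set (CF α)) :
    ((Γ ⊆ Δ ∧ CConsistent Δ) ∧
      ∀ Γ' : Set (CF α), (Γ ⊆ Γ' ∧ CConsistent Γ') → Δ ⊆ Γ' → Γ' = Δ) ↔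
    ((Γ ⊆ Δ ∧ CConsistent Δ) ∧
      (∀ φ : CF α, (∀ n : ℕ, CDeriv Δ (φ.sub (dyCF n))) → φ ∈ Δ) ∧
      (∀ φ ψ : CF α, φ.sub ψ ∈ Δ ∨ ψ.sub φ ∈ Δ)) := by
  constructor
  · rintro ⟨⟨hΓΔ, hΔ⟩, hmax⟩
    have mem_of_consistent_insert : ∀ φ, CConsistent (insert φ Δ) → φ ∈ Δ := fun φ h =>
      hmax _ ⟨hΓΔ.trans (Set.subset_insert φ Δ), h⟩ (Set.subset_insert φ Δ) ▸ Set.mem_insert φ Δ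
    exact ⟨⟨hΓΔ, hΔ⟩,
      fun φ hφ => mem_of_consistent_insert φ (hΔ.insert_of_forall_deriv_sub_dyCF hφ),
      fun φ ψ => (hΔ.insert_sub_or_insert_sub φ ψ).imp
        (mem_of_consistent_insert _) (mem_of_consistent_insert _)⟩
  · rintro ⟨hΔ, hclosed, htotal⟩
    exact ⟨hΔ, fun Γ' hΓ' hΔΓ' => eq_of_consistent_superset hclosed htotal hΓ'.2 hΔΓ'⟩

/-- Characterization of maximal elements of the poset `E(Γ)` of consistent
supersets of a consistent `Γ`: `Δ` is maximal iff it contains `Γ`, is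
consistent, is closed under the infinitary rule
`(∀ n, Δ ⊢ φ ∸ 2^{-n}) ⟹ φ ∈ Δ`, and compares every pair of formulae. -/
theorem maximal_consistent_characterization [Inhabited α]
    (Γ Δ : Set (CF α)) (hΓ : CConsistent Γ) :
    ((Γ ⊆ Δ ∧ CConsistent Δ) ∧
      ∀ Γ' : Set (CF α), (Γ ⊆ Γ' ∧ CConsistent Γ') → Δ ⊆ Γ' → Γ' = Δ) ↔
    ((Γ ⊆ Δ ∧ CConsistent Δ) ∧
      (∀ φ : CF α, (∀ n : ℕ, CDeriv Δ (φ.sub (dyCF n))) → φ ∈ Δ) ∧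
      (∀ φ ψ : CF α, φ.sub ψ ∈ Δ ∨ ψ.sub φ ∈ Δ)) :=
  maximal_consistent_characterization_general Γ Δ
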